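/- On the category C with two objects and two parallel non-identity morphisms 0 → 1, every injective fibration of simplicial presheaves is a flasque fibration: if F_0 → G_0 and F_1 → (F_0 × F_0) ×_{(G_0 × G_0)} G_1 are Kan fibrations, then both maps F_1 → F_0 ×_{G_0} G_1 are Kan fibrations. -/

import Mathlib

open CategoryTheory CategoryTheory.Limits Simplicial SSet Opposite

/-- Presheaves of sets on a small category. -/
abbrev PSh (C : Type) [SmallCategory C] := Cᵒᵖ ⥤ Type

/-- Simplicial presheaves on a small category. -/
abbrev SPre (C : Type) [SmallCategory C] := Cᵒᵖ ⥤ SSet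

namespace Flasque

variable {C : Type} [SmallCategory C]


variable {C : Type} [SmallCategory C]

/-- The source of the union coequalizer diagram: the coproduct of the pairwise
fiber products (computed in presheaves). -/
noncomputable def pairObj {ι : Type} {A : ι → PSh C} {X : PSh C} (g : ∀ i, A i ⟶ X)
    (p : ι × ι) : PSh C :=
  pullback (g p.1) (g p.2)

noncomputable def fstMap {ι : Type} {A : ι → PSh C} {X : PSh C} (g : ∀ i, A i ⟶ X) :
    (∐ pairObj g) ⟶ ∐ A :=
  Sigma.desc fun p => pullback.fst (g p.1) (g p.2) ≫ Sigma.ι A p.1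

noncomputable def sndMap {ι : Type} {A : ι → PSh C} {X : PSh C} (g : ∀ i, A i ⟶ X) :
    (∐ pairObj g) ⟶ ∐ A :=
  Sigma.desc fun p => pullback.snd (g p.1) (g p.2) ≫ Sigma.ι A p.2

/-- The union `∪ U`: the coequalizer of `∐ U_i ×_X U_j ⇉ ∐ U_i`. -/
noncomputable def unionPre {ι : Type} {A : ι → PSh C} {X : PSh C} (g : ∀ i, A i ⟶ X) : PSh C :=
  coequalizer (fstMap g) (sndMap g)

/-- The canonical map `∪ U ⟶ X`. -/
noncomputable def unionι {ι : Type} {A : ι → PSh C} {X : PSh C} (g : ∀ i, A i ⟶ X) :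
    unionPre g ⟶ X :=
  coequalizer.desc (Sigma.desc g) (by
    apply Sigma.hom_ext
    intro p
    simp [fstMap, sndMap]
    erw [Category.assoc, Category.assoc, Limits.Sigma.ι_desc, Limits.Sigma.ι_desc]
    exact pullback.condition)



/-- The discrete simplicial set functor. -/
abbrev disc : Type ⥤ SSet := Functor.const SimplexCategoryᵒᵖ

/-- View a presheaf of sets as a discrete simplicial presheaf. -/
abbrev toSPre : PSh C ⥤ SPre C := (Functor.whiskeringRight Cᵒᵖ Type SSet).obj disc

/-- The simplicial presheaf represented by an object of `C`. -/
noncomputable abbrev sRep (X : C) : SPre C := toSPre.obj (yoneda.obj X)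

/-- A map of simplicial sets is a Kan fibration if it has the right lifting
property with respect to all horn inclusions. -/
def IsKanFib {K L : SSet} (f : K ⟶ L) : Prop :=
  ∀ (n : ℕ) (i : Fin (n + 1)), HasLiftingProperty (SSet.horn n i).ι f

/-- A map of simplicial sets is a weak equivalence if its geometric realization
is a homotopy equivalence of topological spaces. -/
def IsWeakEquiv {K L : SSet} (f : K ⟶ L) : Prop :=
  ∃ e : ContinuousMap.HomotopyEquiv (SSet.toTop.obj K) (SSet.toTop.obj L),
    e.toFun = (SSet.toTop.map f).hom

/-- Objectwise weak equivalence of simplicial presheaves. -/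
def ObjWE {F G : SPre C} (η : F ⟶ G) : Prop := ∀ c, IsWeakEquiv (η.app c)

/-- Objectwise (injective) cofibration of simplicial presheaves. -/
def IsInjCof {F G : SPre C} (η : F ⟶ G) : Prop := ∀ c, Mono (η.app c)

/-- Projective fibration of simplicial presheaves. -/
def IsProjFib {F G : SPre C} (η : F ⟶ G) : Prop := ∀ c, IsKanFib (η.app c)

/-- Tensor of a simplicial presheaf with a simplicial set (objectwise product). -/
noncomputable def tensorObj (A : SPre C) (K : SSet) : SPre C where
  obj c := A.obj c ⨯ K
  map f := prod.map (A.map f) (𝟙 K)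
  map_id c := by simp
  map_comp f g := by simp

/-- Tensor of a map of simplicial presheaves with a map of simplicial sets. -/
noncomputable def tensorHom {A B : SPre C} (f : A ⟶ B) {K L : SSet} (g : K ⟶ L) :
    tensorObj A K ⟶ tensorObj B L where
  app c := prod.map (f.app c) g
  naturality c d u := by
    dsimp [tensorObj]
    rw [prod.map_map, prod.map_map]
    simp

@[simp]
lemma tensorHom_id (A : SPre C) (K : SSet) : tensorHom (𝟙 A) (𝟙 K) = 𝟙 (tensorObj A K) := by
  apply NatTrans.ext; funext c
  simp [tensorHom, tensorObj]

lemma tensorHom_comp {A B D : SPre C} (f : A ⟶ B) (f' : B ⟶ D) {K L M : SSet}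
    (g : K ⟶ L) (g' : L ⟶ M) :
    tensorHom (f ≫ f') (g ≫ g') = tensorHom f g ≫ tensorHom f' g' := by
  apply NatTrans.ext; funext c
  simp [tensorHom, prod.map_map]
  exact (prod.map_map _ _ _ _).symm

/-- The pushout product of a map of simplicial presheaves with a map of
simplicial sets. -/
noncomputable def pushoutProd {A B : SPre C} (f : A ⟶ B) {K L : SSet} (g : K ⟶ L) :
    pushout (tensorHom f (𝟙 K)) (tensorHom (𝟙 A) g) ⟶ tensorObj B L :=
  pushout.desc (tensorHom (𝟙 B) g) (tensorHom f (𝟙 L))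
    (by rw [← tensorHom_comp, ← tensorHom_comp]; simp)

/-- The union map `∪U ⟶ X`, viewed as a map of (discrete) simplicial presheaves. -/
noncomputable def sUnionι {n : ℕ} (U : Fin n → C) (X : C) (g : ∀ i, U i ⟶ X) :
    toSPre.obj (unionPre (fun i => yoneda.map (g i))) ⟶ sRep X :=
  toSPre.map (unionι (fun i => yoneda.map (g i)))

/-- A map of simplicial presheaves is a flasque fibration if it has the right
lifting property with respect to all pushout products
`(∪U → X) □ (Λ^{n,k} → Δ^n)`, for `U` a finite collection of monomorphisms
into an object `X` of `C`. -/
def IsFlasqueFib {F G : SPre C} (η : F ⟶ G) : Prop :=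
  ∀ (n : ℕ) (U : Fin n → C) (X : C) (g : ∀ i, U i ⟶ X), (∀ i, Mono (g i)) →
    ∀ (m : ℕ) (k : Fin (m + 1)),
      HasLiftingProperty (pushoutProd (sUnionι U X g) (SSet.horn m k).ι) η

/-- A map of simplicial presheaves is a flasque cofibration if it has the left
lifting property with respect to all maps that are both flasque fibrations and
objectwise weak equivalences. -/
def IsFlasqueCof {A B : SPre C} (η : A ⟶ B) : Prop :=
  ∀ {F G : SPre C} (p : F ⟶ G), IsFlasqueFib p → ObjWE p → HasLiftingProperty η p

/-- Projective cofibrations: left lifting property with respect to objectwise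
acyclic projective fibrations. -/
def IsProjCof {A B : SPre C} (η : A ⟶ B) : Prop :=
  ∀ {F G : SPre C} (p : F ⟶ G), IsProjFib p → ObjWE p → HasLiftingProperty η p

/-- Injective fibrations: right lifting property with respect to objectwise
acyclic injective cofibrations. -/
def IsInjFib {F G : SPre C} (η : F ⟶ G) : Prop :=
  ∀ {A B : SPre C} (j : A ⟶ B), IsInjCof j → ObjWE j → HasLiftingProperty j η

end Flasque

universe u

namespace Flasque

open WalkingParallelPair WalkingParallelPairHom

/-- For a map `η : F ⟶ G` of simplicial presheaves on the walking parallel pair and a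
structure morphism `w : zero ⟶ one`, the induced map `F₁ → F₀ ×_{G₀} G₁`. -/
noncomputable def wppCmp {F G : SPre.{u} WalkingParallelPair} (η : F ⟶ G)
    (w : WalkingParallelPair.zero ⟶ WalkingParallelPair.one) :
    F.obj (op WalkingParallelPair.one) ⟶
      pullback (η.app (op WalkingParallelPair.zero)) (G.map w.op) :=
  pullback.lift (F.map w.op) (η.app (op WalkingParallelPair.one)) (η.naturality w.op)

/-- The induced map `F₁ → (F₀ × F₀) ×_{G₀ × G₀} G₁`. -/
noncomputable def wppInjCmp {F G : SPre.{u} WalkingParallelPair} (η : F ⟶ G) :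
    F.obj (op WalkingParallelPair.one) ⟶
      pullback
        (prod.map (η.app (op WalkingParallelPair.zero)) (η.app (op WalkingParallelPair.zero)))
        (prod.lift (G.map (left : _ ⟶ _).op) (G.map (right : _ ⟶ _).op)) :=
  pullback.lift
    (prod.lift (F.map (left : _ ⟶ _).op) (F.map (right : _ ⟶ _).op))
    (η.app (op WalkingParallelPair.one))
    (by
      apply Limits.prod.hom_ext <;> simp [η.naturality])

end Flasque

/-!
Along either structure morphism, `F₁ → F₀ ×_{G₀} G₁` factors as `F₁ → (F₀ × F₀) ×_{G₀ × G₀} G₁`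
followed by the projection forgetting one copy of `F₀`. That projection is a base change of
`F₀ → G₀`, so both factors are Kan fibrations, and Kan fibrations compose.
-/

universe v

namespace Flasque

section KanFibration

variable {K L M : SSet}

lemma IsKanFib.comp {f : K ⟶ L} {g : L ⟶ M} (hf : IsKanFib f) (hg : IsKanFib g) :
    IsKanFib (f ≫ g) := fun n i =>
  have := hf n i
  have := hg n i
  inferInstance

lemma IsKanFib.of_isPullback {P : SSet} {s : P ⟶ L} {f : P ⟶ K} {g : L ⟶ M} {t : K ⟶ M}
    (h : IsPullback s f g t) (hg : IsKanFib g) : IsKanFib f := fun n i =>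
  have := hg n i
  h.hasLiftingProperty _

end KanFibration

section PullbackProdMap

variable {𝒞 : Type u} [Category.{v} 𝒞] [HasPullbacks 𝒞] [HasBinaryProducts 𝒞]
  {X₁ X₂ Z₁ Z₂ W : 𝒞} (a₁ : X₁ ⟶ Z₁) (a₂ : X₂ ⟶ Z₂) (d₁ : W ⟶ Z₁) (d₂ : W ⟶ Z₂)

noncomputable abbrev pullbackProdMapFst :
    pullback (prod.map a₁ a₂) (prod.lift d₁ d₂) ⟶ pullback a₁ d₁ :=
  pullback.map _ _ _ _ prod.fst (𝟙 W) prod.fst (by simp)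
    (by simp only [prod.lift_fst, Category.id_comp])

noncomputable abbrev pullbackProdMapSnd :
    pullback (prod.map a₁ a₂) (prod.lift d₁ d₂) ⟶ pullback a₂ d₂ :=
  pullback.map _ _ _ _ prod.snd (𝟙 W) prod.snd (by simp)
    (by simp only [prod.lift_snd, Category.id_comp])

lemma isPullback_pullbackProdMapFst :
    IsPullback (pullback.fst _ _ ≫ prod.snd) (pullbackProdMapFst a₁ a₂ d₁ d₂) a₂
      (pullback.snd _ _ ≫ d₂) := by
  refine IsPullback.mk' ?_ ?_ ?_
  · simp only [Category.assoc, pullback.lift_snd_assoc, Category.comp_id]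
    rw [← prod.map_snd a₁, pullback.condition_assoc, prod.lift_snd]
  · intro T φ φ' h₂ h₁
    apply pullback.hom_ext
    · apply prod.hom_ext
      · simpa [pullback.lift_fst] using congr($h₁ ≫ pullback.fst _ _)
      · simpa using h₂
    · simpa [pullback.lift_snd] using congr($h₁ ≫ pullback.snd _ _)
  · intro T x y h
    refine ⟨pullback.lift (prod.lift (y ≫ pullback.fst _ _) x) (y ≫ pullback.snd _ _) ?_, ?_, ?_⟩
    · apply prod.hom_ext <;> simp [pullback.condition, h, prod.lift_fst, prod.lift_snd]
    · simp [pullback.lift_fst_assoc, prod.lift_snd]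
    · apply pullback.hom_ext <;>
        simp [pullback.lift_fst_assoc, pullback.lift_fst, pullback.lift_snd, prod.lift_fst]

lemma isPullback_pullbackProdMapSnd :
    IsPullback (pullback.fst _ _ ≫ prod.fst) (pullbackProdMapSnd a₁ a₂ d₁ d₂) a₁
      (pullback.snd _ _ ≫ d₁) := by
  refine IsPullback.mk' ?_ ?_ ?_
  · simp only [Category.assoc, pullback.lift_snd_assoc, Category.comp_id]
    rw [← prod.map_fst a₁ a₂, pullback.condition_assoc, prod.lift_fst]
  · intro T φ φ' h₁ h₂
    apply pullback.hom_ext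
    · apply prod.hom_ext
      · simpa using h₁
      · simpa [pullback.lift_fst] using congr($h₂ ≫ pullback.fst _ _)
    · simpa [pullback.lift_snd] using congr($h₂ ≫ pullback.snd _ _)
  · intro T x y h
    refine ⟨pullback.lift (prod.lift x (y ≫ pullback.fst _ _)) (y ≫ pullback.snd _ _) ?_, ?_, ?_⟩
    · apply prod.hom_ext <;> simp [pullback.condition, h, prod.lift_fst, prod.lift_snd]
    · simp [pullback.lift_fst_assoc, prod.lift_fst]
    · apply pullback.hom_ext <;>
        simp [pullback.lift_fst_assoc, pullback.lift_fst, pullback.lift_snd, prod.lift_snd]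

end PullbackProdMap

open WalkingParallelPair WalkingParallelPairHom

lemma wppCmp_left_eq {F G : SPre.{u} WalkingParallelPair} (η : F ⟶ G) :
    wppCmp η left = wppInjCmp η ≫ pullbackProdMapFst (η.app (op zero)) (η.app (op zero))
      (G.map (left : _ ⟶ _).op) (G.map (right : _ ⟶ _).op) := by
  apply pullback.hom_ext <;>
    simp [wppCmp, wppInjCmp, pullback.lift_fst, pullback.lift_snd, pullback.lift_fst_assoc,
      prod.lift_fst]

lemma wppCmp_right_eq {F G : SPre.{u} WalkingParallelPair} (η : F ⟶ G) :
    wppCmp η right = wppInjCmp η ≫ pullbackProdMapSnd (η.app (op zero)) (η.app (op zero))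
      (G.map (left : _ ⟶ _).op) (G.map (right : _ ⟶ _).op) := by
  apply pullback.hom_ext <;>
    simp [wppCmp, wppInjCmp, pullback.lift_fst, pullback.lift_snd, pullback.lift_fst_assoc,
      prod.lift_snd]

end Flasque

open Flasque WalkingParallelPair WalkingParallelPairHom in
/-- On the walking parallel pair category, every injective fibration of
simplicial presheaves is a flasque fibration: if `F₀ → G₀` and
`F₁ → (F₀ × F₀) ×_{G₀ × G₀} G₁` are Kan fibrations, then both maps
`F₁ → F₀ ×_{G₀} G₁` are Kan fibrations. -/
theorem wpp_injFib_implies_flasque_conditions {F G : SPre WalkingParallelPair}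
    (η : F ⟶ G) (h0 : IsKanFib (η.app (op zero))) (h1 : IsKanFib (wppInjCmp η)) :
    IsKanFib (wppCmp η left) ∧ IsKanFib (wppCmp η right) := by
  rw [wppCmp_left_eq, wppCmp_right_eq]
  exact ⟨h1.comp (h0.of_isPullback (isPullback_pullbackProdMapFst _ _ _ _)),
    h1.comp (h0.of_isPullback (isPullback_pullbackProdMapSnd _ _ _ _))⟩
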